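/- arXiv:1906.07949 — 2 statements merged into one kernel-verified Lean document; each statement's English description precedes it below -/
import Mathlib

section
/- Let R, S ∈ M_N(ℂ) be self-adjoint symmetries (R* = R, R² = I, S* = S, S² = I) and U ∈ U(N) a unitary matrix, and set A = R U S U*. Then for every n ≥ 1, tr(A^{n-1} R) = tr(R) if n is odd and tr(A^{n-1} R) = tr(S) if n is even, where tr = (1/N)Tr is the normalized trace. -/
/-!
With `T = U S U*` we have `A = R T` and `T² = 1`, so `A R A = R T R R T = R`. Cyclicity of
the trace then gives `tr(A^{m+2} R) = tr(A^{m+1} R A) = tr(A^m R)`, so `tr(A^m R)` only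
depends on the parity of `m`: it is `tr R` for even `m` and `tr(A R) = tr(R T R) = tr T = tr S`
for odd `m`.
-/

open Matrix

/-- The normalized trace `(1/N) Tr` on `M_N(ℂ)`. -/
noncomputable def ntr (N : ℕ) (M : Matrix (Fin N) (Fin N) ℂ) : ℂ :=
  M.trace / N

theorem mul_mul_mul_self_eq_one_of_mul_self_eq_one {M : Type*} [Monoid M] {S U V : M}
    (hS : S * S = 1) (hVU : V * U = 1) (hUV : U * V = 1) : U * S * V * (U * S * V) = 1 := by
  calc U * S * V * (U * S * V) = U * S * (V * U) * S * V := by simp only [mul_assoc]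
    _ = 1 := by rw [hVU, mul_one, mul_assoc U, hS, mul_one, hUV]

theorem mul_mul_mul_mul_eq_of_mul_self_eq_one {M : Type*} [Monoid M] {R T : M}
    (hR : R * R = 1) (hT : T * T = 1) : R * T * R * (R * T) = R := by
  calc R * T * R * (R * T) = R * T * (R * R) * T := by simp only [mul_assoc]
    _ = R := by rw [hR, mul_one, mul_assoc, hT, mul_one]

namespace Matrix

variable {n α : Type*} [Fintype n] [DecidableEq n] [CommSemiring α]

theorem trace_mul_mul_of_mul_eq_one {U S V : Matrix n n α} (h : V * U = 1) :
    trace (U * S * V) = trace S := by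
  rw [trace_mul_cycle, h, one_mul]

section

variable {A R : Matrix n n α}

theorem trace_pow_add_two_mul_of_mul_mul_eq (h : A * R * A = R) (m : ℕ) :
    trace (A ^ (m + 2) * R) = trace (A ^ m * R) := by
  calc trace (A ^ (m + 2) * R) = trace (A * (A ^ (m + 1) * R)) := by
        rw [pow_succ' A (m + 1), mul_assoc]
    _ = trace (A ^ m * (A * R * A)) := by
        rw [trace_mul_comm, pow_succ]; simp only [mul_assoc]
    _ = trace (A ^ m * R) := by rw [h]

theorem trace_pow_add_two_mul_mul_of_mul_mul_eq (h : A * R * A = R) (m k : ℕ) :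
    trace (A ^ (m + 2 * k) * R) = trace (A ^ m * R) := by
  induction k with
  | zero => simp
  | succ k ih => rw [mul_add_one, ← add_assoc, trace_pow_add_two_mul_of_mul_mul_eq h, ih]

theorem trace_pow_mul_of_mul_mul_eq_of_even (h : A * R * A = R) {m : ℕ} (hm : Even m) :
    trace (A ^ m * R) = trace R := by
  obtain ⟨k, rfl⟩ := hm
  simpa [← two_mul] using trace_pow_add_two_mul_mul_of_mul_mul_eq h 0 k

theorem trace_pow_mul_of_mul_mul_eq_of_odd (h : A * R * A = R) {m : ℕ} (hm : Odd m) :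
    trace (A ^ m * R) = trace (A * R) := by
  obtain ⟨k, rfl⟩ := hm
  simpa [add_comm] using trace_pow_add_two_mul_mul_of_mul_mul_eq h 1 k

end

end Matrix

theorem ntr_pow_mul_symmetry_general (N : ℕ) (R S U : Matrix (Fin N) (Fin N) ℂ)
    (hR2 : R * R = 1)
    (hS2 : S * S = 1)
    (hU : U * Uᴴ = 1) (hU' : Uᴴ * U = 1)
    (A : Matrix (Fin N) (Fin N) ℂ) (hA : A = R * U * S * Uᴴ) :
    ∀ n : ℕ, 1 ≤ n →
      (Odd n → ntr N (A ^ (n - 1) * R) = ntr N R) ∧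
      (Even n → ntr N (A ^ (n - 1) * R) = ntr N S) := by
  have hT : U * S * Uᴴ * (U * S * Uᴴ) = 1 :=
    mul_mul_mul_self_eq_one_of_mul_self_eq_one hS2 hU' hU
  have hAT : A = R * (U * S * Uᴴ) := by rw [hA]; simp only [mul_assoc]
  have hARA : A * R * A = R := hAT ▸ mul_mul_mul_mul_eq_of_mul_self_eq_one hR2 hT
  have hAR : trace (A * R) = trace S := by
    rw [hAT, trace_mul_mul_of_mul_eq_one hR2, trace_mul_mul_of_mul_eq_one hU']
  intro n hn
  refine ⟨fun hodd => ?_, fun heven => ?_⟩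
  · rw [ntr, ntr, trace_pow_mul_of_mul_mul_eq_of_even hARA (Nat.Odd.sub_odd hodd odd_one)]
  · rw [ntr, ntr, trace_pow_mul_of_mul_mul_eq_of_odd hARA (Nat.Even.sub_odd hn heven odd_one),
      hAR]

/-- Let `R, S` be self-adjoint symmetries, `U` unitary, and `A = R U S U*`.
Then `tr(A^{n-1} R) = tr R` for odd `n` and `tr(A^{n-1} R) = tr S` for even `n`. -/
theorem ntr_pow_mul_symmetry (N : ℕ) (R S U : Matrix (Fin N) (Fin N) ℂ)
    (hR : R.IsHermitian) (hR2 : R * R = 1)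
    (hS : S.IsHermitian) (hS2 : S * S = 1)
    (hU : U * Uᴴ = 1) (hU' : Uᴴ * U = 1)
    (A : Matrix (Fin N) (Fin N) ℂ) (hA : A = R * U * S * Uᴴ) :
    ∀ n : ℕ, 1 ≤ n →
      (Odd n → ntr N (A ^ (n - 1) * R) = ntr N R) ∧
      (Even n → ntr N (A ^ (n - 1) * R) = ntr N S) :=
  ntr_pow_mul_symmetry_general N R S U hR2 hS2 hU hU' A hA
end

section
/- Let R, S ∈ M_N(ℂ) be self-adjoint symmetries, U ∈ U(N) unitary, A = RUSU*, α = tr(R), β = tr(S). Then for every n ≥ 2 and every 1 ≤ p ≤ n−1, the product tr(A^{n-p-1}R)·tr(A^{p-1}R) equals α² if n is even and p is odd, β² if n and p are both even, and αβ if n is odd. -/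
/-!
With `B = U S Uᴴ` we have `A = R B` where `R² = B² = 1`, so `R A = B` and `A B = R`. Cyclicity of
the trace then gives `tr(A^{k+2} R) = tr(A^k R)`, hence `tr(A^k R)` is `tr R` for even `k` and
`tr B = tr S` for odd `k`. The three cases are the possible parities of `n - p - 1` and `p - 1`.
-/

open Matrix

namespace Matrix

variable {n α : Type*} [Fintype n] [DecidableEq n] [CommSemiring α]

section Involutions

variable {P Q : Matrix n n α} (hP : P * P = 1) (hQ : Q * Q = 1)
include hP hQ

theorem trace_mul_pow_add_two_mul (k : ℕ) :
    trace ((P * Q) ^ (k + 2) * P) = trace ((P * Q) ^ k * P) := by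
  have hPA : P * (P * Q) = Q := by rw [← mul_assoc, hP, one_mul]
  have hAQ : P * Q * Q = P := by rw [mul_assoc, hQ, mul_one]
  calc trace ((P * Q) ^ (k + 2) * P)
      = trace ((P * Q) * ((P * Q) ^ (k + 1) * P)) := by rw [pow_succ', mul_assoc]
    _ = trace ((P * Q) ^ (k + 1) * (P * (P * Q))) := by rw [trace_mul_comm, mul_assoc]
    _ = trace ((P * Q) ^ k * P) := by rw [hPA, pow_succ, mul_assoc, hAQ]

theorem trace_mul_pow_mul_of_even {k : ℕ} (hk : Even k) :
    trace ((P * Q) ^ k * P) = trace P := by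
  obtain ⟨m, rfl⟩ := hk
  induction m with
  | zero => simp
  | succ m ih => rwa [show m + 1 + (m + 1) = m + m + 2 by ring, trace_mul_pow_add_two_mul hP hQ]

theorem trace_mul_pow_mul_of_odd {k : ℕ} (hk : Odd k) :
    trace ((P * Q) ^ k * P) = trace Q := by
  obtain ⟨m, rfl⟩ := hk
  induction m with
  | zero => rw [mul_zero, zero_add, pow_one, trace_mul_comm, ← mul_assoc, hP, one_mul]
  | succ m ih => rwa [show 2 * (m + 1) + 1 = 2 * m + 1 + 2 by ring, trace_mul_pow_add_two_mul hP hQ]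

end Involutions

section UnitaryConjugate

variable [StarRing α] {U S : Matrix n n α}

theorem conj_mul_conj_eq_one (hU : U * Uᴴ = 1) (hU' : Uᴴ * U = 1) (hS : S * S = 1) :
    (U * S * Uᴴ) * (U * S * Uᴴ) = 1 := by
  calc (U * S * Uᴴ) * (U * S * Uᴴ) = U * S * (Uᴴ * U) * S * Uᴴ := by simp only [mul_assoc]
    _ = 1 := by rw [hU', mul_one, mul_assoc U, hS, mul_one, hU]

theorem trace_conj_of_unitary (hU' : Uᴴ * U = 1) : trace (U * S * Uᴴ) = trace S := by
  rw [trace_mul_comm, ← mul_assoc, hU', one_mul]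

end UnitaryConjugate

end Matrix

theorem ntr_prod_cases_general (N : ℕ) (R S U : Matrix (Fin N) (Fin N) ℂ)
    (hR2 : R * R = 1)
    (hS2 : S * S = 1)
    (hU : U * Uᴴ = 1) (hU' : Uᴴ * U = 1)
    (A : Matrix (Fin N) (Fin N) ℂ) (hA : A = R * U * S * Uᴴ)
    (α β : ℂ) (hα : α = ntr N R) (hβ : β = ntr N S) :
    ∀ n : ℕ, 2 ≤ n → ∀ p : ℕ, 1 ≤ p → p ≤ n - 1 →
      (Even n → Odd p → ntr N (A ^ (n - p - 1) * R) * ntr N (A ^ (p - 1) * R) = α ^ 2) ∧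
      (Even n → Even p → ntr N (A ^ (n - p - 1) * R) * ntr N (A ^ (p - 1) * R) = β ^ 2) ∧
      (Odd n → ntr N (A ^ (n - p - 1) * R) * ntr N (A ^ (p - 1) * R) = α * β) := by
  have hB2 := conj_mul_conj_eq_one hU hU' hS2
  have hAB : A = R * (U * S * Uᴴ) := by rw [hA]; simp only [mul_assoc]
  have ntr_pow_mul (k : ℕ) : ntr N (A ^ k * R) = if Even k then α else β := by
    simp only [hα, hβ, ntr, hAB]
    split_ifs with hk
    · rw [trace_mul_pow_mul_of_even hR2 hB2 hk]
    · rw [trace_mul_pow_mul_of_odd hR2 hB2 (Nat.not_even_iff_odd.mp hk), trace_conj_of_unitary hU']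
  intro n hn p hp hpn
  simp only [ntr_pow_mul, Nat.even_iff, Nat.odd_iff]
  refine ⟨fun _ _ => ?_, fun _ _ => ?_, fun _ => ?_⟩ <;> split_ifs <;> first | omega | ring

/-- Let `R, S` be self-adjoint symmetries, `U` unitary, `A = RUSU*`, `α = tr R`,
`β = tr S`. For `n ≥ 2` and `1 ≤ p ≤ n−1`, the product `tr(A^{n-p-1}R)·tr(A^{p-1}R)`
equals `α²` if `n` is even and `p` odd, `β²` if `n` and `p` are both even,
and `αβ` if `n` is odd. -/
theorem ntr_prod_cases (N : ℕ) (R S U : Matrix (Fin N) (Fin N) ℂ)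
    (hR : R.IsHermitian) (hR2 : R * R = 1)
    (hS : S.IsHermitian) (hS2 : S * S = 1)
    (hU : U * Uᴴ = 1) (hU' : Uᴴ * U = 1)
    (A : Matrix (Fin N) (Fin N) ℂ) (hA : A = R * U * S * Uᴴ)
    (α β : ℂ) (hα : α = ntr N R) (hβ : β = ntr N S) :
    ∀ n : ℕ, 2 ≤ n → ∀ p : ℕ, 1 ≤ p → p ≤ n - 1 →
      (Even n → Odd p → ntr N (A ^ (n - p - 1) * R) * ntr N (A ^ (p - 1) * R) = α ^ 2) ∧
      (Even n → Even p → ntr N (A ^ (n - p - 1) * R) * ntr N (A ^ (p - 1) * R) = β ^ 2) ∧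
      (Odd n → ntr N (A ^ (n - p - 1) * R) * ntr N (A ^ (p - 1) * R) = α * β) :=
  ntr_prod_cases_general N R S U hR2 hS2 hU hU' A hA α β hα hβ
end
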